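/- arXiv:2010.01322 — 5 statements merged into one kernel-verified Lean document; each statement's English description precedes it below -/
import Mathlib

section
/- Let k ≥ 1, let p₁,…,p_k ∈ ℝ³, let m ≥ 0, and let x ∈ ℝ³. Assume that either (a) ‖x‖ > (4/3)·max_i ‖p_i‖, or (b) x ≠ 0 and for every i either p_i = 0 or ‖x‖ < ‖p_i‖. Then 4m + ∑_{i=1}^k (3‖x‖² − 7⟪x, p_i⟫ + 4‖p_i‖²) / (2‖x − p_i‖³) > 0. (Note that under either hypothesis x ≠ p_i for all i, so all denominators are nonzero.) -/
/-!
Each summand is positive. By Cauchy–Schwarz its numerator is at least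
`3a² − 7ab + 4b² = (3a − 4b)(a − b)` with `a = ‖x‖`, `b = ‖p i‖`, and both hypotheses make
the two factors have the same strict sign; this also forces `x ≠ p i`, so the denominator is
positive.
-/

open RealInnerProductSpace

section

variable {E : Type*} [NormedAddCommGroup E] [InnerProductSpace ℝ E]

theorem mul_sub_le_three_sq_sub_seven_inner_add_four_sq (x p : E) :
    (3 * ‖x‖ - 4 * ‖p‖) * (‖x‖ - ‖p‖) ≤ 3 * ‖x‖ ^ 2 - 7 * ⟪x, p⟫ + 4 * ‖p‖ ^ 2 := by
  nlinarith [real_inner_le_norm x p]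

theorem gibbonsHawking_summand_pos {x p : E} (h : 0 < (3 * ‖x‖ - 4 * ‖p‖) * (‖x‖ - ‖p‖)) :
    0 < (3 * ‖x‖ ^ 2 - 7 * ⟪x, p⟫ + 4 * ‖p‖ ^ 2) / (2 * ‖x - p‖ ^ 3) := by
  have hne : x ≠ p := by
    rintro rfl
    simp at h
  have hdist : 0 < ‖x - p‖ := norm_pos_iff.mpr (sub_ne_zero.mpr hne)
  exact div_pos (h.trans_le (mul_sub_le_three_sq_sub_seven_inner_add_four_sq x p))
    (by positivity)

end

/-- **3-convexity of circle-invariant spheres in multi-Eguchi--Hanson/multi-Taub--NUT.**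
For the Gibbons--Hawking potential `φ(x) = m + ∑ i, 1/(2‖x - p i‖)`, if either
`‖x‖ > (4/3)·max_i ‖p i‖`, or `x ≠ 0` and every `p i` is `0` or has `‖x‖ < ‖p i‖`, then
`⟪∇φ(x), x⟫ + 4φ(x) = 4m + ∑ i, (3‖x‖² − 7⟪x, p i⟫ + 4‖p i‖²)/(2‖x − p i‖³) > 0`. -/
theorem stmt_1 (k : ℕ) (hk : 1 ≤ k) (p : Fin k → EuclideanSpace ℝ (Fin 3))
    (m : ℝ) (hm : 0 ≤ m) (x : EuclideanSpace ℝ (Fin 3))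
    (h : ‖x‖ > 4 / 3 * (Finset.univ.sup' (Finset.univ_nonempty_iff.mpr ⟨⟨0, hk⟩⟩)
            fun i => ‖p i‖)
        ∨ (x ≠ 0 ∧ ∀ i, p i = 0 ∨ ‖x‖ < ‖p i‖)) :
    0 < 4 * m + ∑ i : Fin k,
        (3 * ‖x‖ ^ 2 - 7 * ⟪x, p i⟫ + 4 * ‖p i‖ ^ 2) / (2 * ‖x - p i‖ ^ 3) := by
  have hfactor : ∀ i, 0 < (3 * ‖x‖ - 4 * ‖p i‖) * (‖x‖ - ‖p i‖) := by
    intro i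
    rcases h with hfar | ⟨hx, hnear⟩
    · have hle := Finset.le_sup' (fun i => ‖p i‖) (Finset.mem_univ i)
      nlinarith [norm_nonneg (p i)]
    · rcases hnear i with hzero | hlt
      · have hx' : 0 < ‖x‖ := norm_pos_iff.mpr hx
        simp only [hzero, norm_zero]
        nlinarith
      · exact mul_pos_of_neg_of_neg (by linarith [norm_nonneg x]) (by linarith)
  have hsum := Finset.sum_pos (fun i _ => gibbonsHawking_summand_pos (hfactor i))
    (Finset.univ_nonempty_iff.mpr ⟨⟨0, hk⟩⟩)
  linarith
end

section
/- Let k ≥ 1, let p₁,…,p_k ∈ ℝ³, let m ≥ 0, and let x ∈ ℝ³ with x ≠ p_i for all i. Write ρ(y) = √(y₁² + y₂²) for y ∈ ℝ³. Assume that either (a) ρ(x) > 2·max_i ρ(p_i) and ρ(x) > 0, or (b) ρ(x) > 0 and for every i either ρ(p_i) = 0 or ρ(x) < ρ(p_i). Then 2m + ∑_{i=1}^k (2‖x − p_i‖² − x₁(x₁ − (p_i)₁) − x₂(x₂ − (p_i)₂)) / (2‖x − p_i‖³) > 0. -/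
/-!
Write `a`, `b` for the horizontal projections of `x` and `p i`. The numerator of the `i`-th
term equals `⟪a - b, a - 2b⟫ + 2 (x₃ - (p i)₃)²`, and by Cauchy–Schwarz
`⟪a - b, a - 2b⟫ ≥ (‖a‖ - ‖b‖)(‖a‖ - 2‖b‖)`, which is positive as soon as `‖a‖ > 2‖b‖` or
`‖a‖ < ‖b‖`. Either hypothesis puts every `p i` in one of these two regimes (`ρ (p i) = 0`
falls into the first), so every term of the sum is positive.
-/

open RealInnerProductSpace

section
variable {E : Type*} [NormedAddCommGroup E] [InnerProductSpace ℝ E]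

theorem mul_sub_norm_le_inner_sub_sub_two_smul (a b : E) :
    (‖a‖ - ‖b‖) * (‖a‖ - 2 * ‖b‖) ≤ ⟪a - b, a - (2 : ℝ) • b⟫ := by
  have hab : ⟪a, b⟫ ≤ ‖a‖ * ‖b‖ := real_inner_le_norm a b
  have hexpand : ⟪a - b, a - (2 : ℝ) • b⟫ = ‖a‖ ^ 2 - 3 * ⟪a, b⟫ + 2 * ‖b‖ ^ 2 := by
    simp only [inner_sub_left, inner_sub_right, inner_smul_right, real_inner_self_eq_norm_sq,
      real_inner_comm a b]
    ring
  nlinarith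

theorem inner_sub_sub_two_smul_pos {a b : E} (h : 2 * ‖b‖ < ‖a‖ ∨ ‖a‖ < ‖b‖) :
    0 < ⟪a - b, a - (2 : ℝ) • b⟫ := by
  refine lt_of_lt_of_le ?_ (mul_sub_norm_le_inner_sub_sub_two_smul a b)
  rcases h with h | h
  · exact mul_pos (by linarith [norm_nonneg b]) (by linarith)
  · exact mul_pos_of_neg_of_neg (by linarith) (by linarith [norm_nonneg b])
end

noncomputable def horizontal (y : EuclideanSpace ℝ (Fin 3)) : EuclideanSpace ℝ (Fin 2) :=
  !₂[y 0, y 1]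

theorem norm_horizontal (y : EuclideanSpace ℝ (Fin 3)) :
    ‖horizontal y‖ = √(y 0 ^ 2 + y 1 ^ 2) := by
  simp [horizontal, EuclideanSpace.norm_eq, Fin.sum_univ_two]

theorem inner_horizontal (y z : EuclideanSpace ℝ (Fin 3)) :
    ⟪horizontal y, horizontal z⟫ = y 0 * z 0 + y 1 * z 1 := by
  simp [horizontal, PiLp.inner_apply, Fin.sum_univ_two, mul_comm]

theorem norm_sub_sq_eq_fin_three (y z : EuclideanSpace ℝ (Fin 3)) :
    ‖y - z‖ ^ 2 = (y 0 - z 0) ^ 2 + (y 1 - z 1) ^ 2 + (y 2 - z 2) ^ 2 := by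
  simp [EuclideanSpace.norm_sq_eq, Fin.sum_univ_three]

theorem two_mul_norm_sub_sq_sub_eq (x y : EuclideanSpace ℝ (Fin 3)) :
    2 * ‖x - y‖ ^ 2 - x 0 * (x 0 - y 0) - x 1 * (x 1 - y 1) =
      ⟪horizontal x - horizontal y, horizontal x - (2 : ℝ) • horizontal y⟫
        + 2 * (x 2 - y 2) ^ 2 := by
  simp only [inner_sub_left, inner_sub_right, inner_smul_right, inner_horizontal,
    norm_sub_sq_eq_fin_three]
  ring

theorem gibbonsHawking_term_pos {x y : EuclideanSpace ℝ (Fin 3)} (hxy : x ≠ y)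
    (h : 2 * ‖horizontal y‖ < ‖horizontal x‖ ∨ ‖horizontal x‖ < ‖horizontal y‖) :
    0 < (2 * ‖x - y‖ ^ 2 - x 0 * (x 0 - y 0) - x 1 * (x 1 - y 1)) / (2 * ‖x - y‖ ^ 3) := by
  have hdist : 0 < ‖x - y‖ := norm_pos_iff.mpr (sub_ne_zero.mpr hxy)
  rw [two_mul_norm_sub_sq_sub_eq]
  have := inner_sub_sub_two_smul_pos h
  positivity

/-- **3-convexity of circle-invariant cylinders in multi-Eguchi--Hanson/multi-Taub--NUT.**
For the Gibbons--Hawking potential `φ(x) = m + ∑ i, 1/(2‖x - p i‖)` and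
`ρ(y) = √(y₁² + y₂²)`, if either `ρ(x) > 2·max_i ρ(p i)` with `ρ(x) > 0`, or `ρ(x) > 0`
and every `p i` has `ρ(p i) = 0` or `ρ(x) < ρ(p i)`, then
`ρ·(⟪∇φ(x), ν⟫ + 2φ(x)/ρ) = 2m + ∑ i, (2‖x − p i‖² − x₁(x₁ − (p i)₁) − x₂(x₂ − (p i)₂))/(2‖x − p i‖³) > 0`. -/
theorem stmt_2 (k : ℕ) (hk : 1 ≤ k) (p : Fin k → EuclideanSpace ℝ (Fin 3))
    (m : ℝ) (hm : 0 ≤ m) (x : EuclideanSpace ℝ (Fin 3)) (hxp : ∀ i, x ≠ p i)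
    (ρ : EuclideanSpace ℝ (Fin 3) → ℝ)
    (hρ : ∀ y, ρ y = Real.sqrt (y 0 ^ 2 + y 1 ^ 2))
    (h : (ρ x > 2 * (Finset.univ.sup' (Finset.univ_nonempty_iff.mpr ⟨⟨0, hk⟩⟩)
              fun i => ρ (p i)) ∧ ρ x > 0)
        ∨ (ρ x > 0 ∧ ∀ i, ρ (p i) = 0 ∨ ρ x < ρ (p i))) :
    0 < 2 * m + ∑ i : Fin k,
        (2 * ‖x - p i‖ ^ 2 - x 0 * (x 0 - p i 0) - x 1 * (x 1 - p i 1)) /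
          (2 * ‖x - p i‖ ^ 3) := by
  have hρ_eq : ∀ y, ρ y = ‖horizontal y‖ := fun y => by rw [hρ, norm_horizontal]
  have hcases : ∀ i, 2 * ρ (p i) < ρ x ∨ ρ x < ρ (p i) := by
    intro i
    rcases h with ⟨hmax, -⟩ | ⟨hx, hp⟩
    · have hle := Finset.le_sup' (fun j => ρ (p j)) (Finset.mem_univ i)
      left; linarith
    · rcases hp i with h0 | hlt
      · left; linarith
      · exact Or.inr hlt
  have hterms := fun i (_ : i ∈ Finset.univ) =>
    gibbonsHawking_term_pos (hxp i) (by simpa only [hρ_eq] using hcases i)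
  have hsum := Finset.sum_pos hterms (Finset.univ_nonempty_iff.mpr ⟨⟨0, hk⟩⟩)
  linarith
end

section
/- Let k ≥ 1, let p₁,…,p_k ∈ ℝ³, let m ≥ 0, set A = max_i ‖p_i‖, and let C ∈ ℝ satisfy C³ = 4C² + 5C + 2. Let x ∈ ℝ³ with ‖x‖ > C·A and ‖x‖ > 0, and x ≠ p_i for all i. Define φ(x) = m + ∑_{i=1}^k 1/(2‖x − p_i‖) and G(x) = −∑_{i=1}^k (x − p_i)/(2‖x − p_i‖³). Then ‖G(x)‖² + 2φ(x)·⟪G(x), x⟫/‖x‖² < 0. -/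
/-!
Put `aᵢ = ‖x - pᵢ‖⁻¹` and `Sₙ = ∑ aᵢⁿ`, `r = ‖x‖`. Then `‖G‖ ≤ S₂/2`, `φ ≥ S₁/2`, and, since
`⟪x - pᵢ, x⟫ ≥ r(r - A)`, `⟪G, x⟫ ≤ -r(r - A)S₃/2`. With Cauchy–Schwarz `S₂² ≤ S₁S₃` this gives
`‖G‖² + 2φ⟪G, x⟫/r² ≤ S₁S₃(2A - r)/(4r)`, which is negative as soon as `r > 2A`; and the root
`C ≈ 5.07` exceeds `2`.
-/

open RealInnerProductSpace

theorem two_lt_of_cube_eq {C : ℝ} (hC : C ^ 3 = 4 * C ^ 2 + 5 * C + 2) : 2 < C := by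
  nlinarith [sq_nonneg (2 * C + 1), sq_nonneg (24 * C + 13)]

theorem sq_sum_sq_le_sum_mul_sum_pow_three {ι : Type*} [Fintype ι] {a : ι → ℝ}
    (ha : ∀ i, 0 ≤ a i) : (∑ i, a i ^ 2) ^ 2 ≤ (∑ i, a i) * ∑ i, a i ^ 3 :=
  Finset.sum_sq_le_sum_mul_sum_of_sq_le_mul _ (fun i _ => ha i)
    (fun i _ => pow_nonneg (ha i) 3) fun i _ => le_of_eq (by ring)

section GibbonsHawking

variable {ι E : Type*} [Fintype ι] [NormedAddCommGroup E]

noncomputable def ghPotential (m : ℝ) (p : ι → E) (x : E) : ℝ :=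
  m + ∑ i, (2 * ‖x - p i‖)⁻¹

theorem sum_inv_div_two_le_ghPotential (p : ι → E) (x : E) {m : ℝ} (hm : 0 ≤ m) :
    (∑ i, ‖x - p i‖⁻¹) / 2 ≤ ghPotential m p x := by
  simp only [ghPotential, Finset.sum_div, mul_inv, inv_mul_eq_div]
  linarith

variable [InnerProductSpace ℝ E]

theorem norm_mul_sub_le_inner_sub_self {x p : E} {A : ℝ} (hp : ‖p‖ ≤ A) :
    ‖x‖ * (‖x‖ - A) ≤ ⟪x - p, x⟫ := by
  rw [inner_sub_left, real_inner_self_eq_norm_sq]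
  nlinarith [real_inner_le_norm p x, norm_nonneg x]

noncomputable def ghGradient (p : ι → E) (x : E) : E :=
  -∑ i, (2 * ‖x - p i‖ ^ 3)⁻¹ • (x - p i)

variable (p : ι → E) (x : E)

theorem norm_ghGradient_le : ‖ghGradient p x‖ ≤ (∑ i, ‖x - p i‖⁻¹ ^ 2) / 2 := by
  rw [ghGradient, norm_neg, Finset.sum_div]
  refine (norm_sum_le _ _).trans_eq (Finset.sum_congr rfl fun i _ => ?_)
  rw [norm_smul, norm_inv, Real.norm_eq_abs, abs_of_nonneg (by positivity)]
  rcases (norm_nonneg (x - p i)).eq_or_lt with h | h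
  · simp [← h]
  · field_simp

theorem inner_ghGradient_le {A : ℝ} (hp : ∀ i, ‖p i‖ ≤ A) :
    ⟪ghGradient p x, x⟫ ≤ -(‖x‖ * (‖x‖ - A) * ∑ i, ‖x - p i‖⁻¹ ^ 3) / 2 := by
  rw [ghGradient, inner_neg_left, sum_inner, neg_div, neg_le_neg_iff, Finset.mul_sum,
    Finset.sum_div]
  refine Finset.sum_le_sum fun i _ => ?_
  rw [real_inner_smul_left, mul_inv, inv_pow, mul_comm (2⁻¹ : ℝ)]
  nlinarith [norm_mul_sub_le_inner_sub_self (x := x) (hp i),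
    inv_nonneg.2 (pow_nonneg (norm_nonneg (x - p i)) 3)]

theorem norm_ghGradient_sq_add_inner_div_neg [Nonempty ι] {m A : ℝ} (hm : 0 ≤ m)
    (hp : ∀ i, ‖p i‖ ≤ A) (hx : 2 * A < ‖x‖) :
    ‖ghGradient p x‖ ^ 2 + 2 * ghPotential m p x * ⟪ghGradient p x, x⟫ / ‖x‖ ^ 2 < 0 := by
  have hA : 0 ≤ A := (norm_nonneg _).trans (hp (Classical.arbitrary ι))
  have ha : ∀ i, 0 < ‖x - p i‖⁻¹ := fun i =>
    inv_pos.2 <| (sub_pos.2 (by linarith [hp i])).trans_le (norm_sub_norm_le x (p i))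
  have hG_sq : ‖ghGradient p x‖ ^ 2 ≤ (∑ i, ‖x - p i‖⁻¹) * (∑ i, ‖x - p i‖⁻¹ ^ 3) / 4 :=
    calc ‖ghGradient p x‖ ^ 2 ≤ ((∑ i, ‖x - p i‖⁻¹ ^ 2) / 2) ^ 2 :=
          pow_le_pow_left₀ (norm_nonneg _) (norm_ghGradient_le p x) 2
      _ ≤ _ := by linarith [sq_sum_sq_le_sum_mul_sum_pow_three fun i => (ha i).le]
  have hGx := inner_ghGradient_le p x hp
  have hφ := sum_inv_div_two_le_ghPotential p x hm
  set G := ghGradient p x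
  set r := ‖x‖
  set S₁ := ∑ i, ‖x - p i‖⁻¹
  set S₃ := ∑ i, ‖x - p i‖⁻¹ ^ 3
  have hS₁ : 0 < S₁ := Finset.sum_pos (fun i _ => ha i) Finset.univ_nonempty
  have hS₃ : 0 < S₃ := Finset.sum_pos (fun i _ => pow_pos (ha i) 3) Finset.univ_nonempty
  have hr : 0 < r := by linarith
  have hGx_nonpos : ⟪G, x⟫ ≤ 0 :=
    hGx.trans (by linarith [mul_pos (mul_pos hr (by linarith : 0 < r - A)) hS₃])
  rw [← mul_lt_mul_iff_of_pos_right (pow_pos hr 2), zero_mul, add_mul,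
    div_mul_cancel₀ _ (pow_pos hr 2).ne']
  calc ‖G‖ ^ 2 * r ^ 2 + 2 * ghPotential m p x * ⟪G, x⟫
      ≤ S₁ * S₃ / 4 * r ^ 2 + 2 * (S₁ / 2) * (-(r * (r - A) * S₃) / 2) := by
        linarith [mul_le_mul_of_nonpos_right hφ hGx_nonpos, mul_le_mul_of_nonneg_right hG_sq
          (sq_nonneg r), mul_le_mul_of_nonneg_left hGx hS₁.le]
    _ = S₁ * S₃ * r * (2 * A - r) / 4 := by ring
    _ < 0 := div_neg_of_neg_of_pos (mul_neg_of_pos_of_neg (by positivity) (by linarith)) four_pos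

end GibbonsHawking

theorem stmt_5_general (k : ℕ) (hk : 1 ≤ k) (p : Fin k → EuclideanSpace ℝ (Fin 3))
    (m : ℝ) (hm : 0 ≤ m) (A C : ℝ)
    (hA : A = Finset.univ.sup' (Finset.univ_nonempty_iff.mpr ⟨⟨0, hk⟩⟩) fun i => ‖p i‖)
    (hC : C ^ 3 = 4 * C ^ 2 + 5 * C + 2)
    (x : EuclideanSpace ℝ (Fin 3)) (hx : ‖x‖ > C * A)
    (φ : ℝ) (hφ : φ = m + ∑ i : Fin k, (2 * ‖x - p i‖)⁻¹)
    (G : EuclideanSpace ℝ (Fin 3))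
    (hG : G = -∑ i : Fin k, (2 * ‖x - p i‖ ^ 3)⁻¹ • (x - p i)) :
    ‖G‖ ^ 2 + 2 * φ * ⟪G, x⟫ / ‖x‖ ^ 2 < 0 := by
  have : Nonempty (Fin k) := ⟨⟨0, hk⟩⟩
  have hp : ∀ i, ‖p i‖ ≤ A := fun i => hA ▸ Finset.le_sup' (fun j => ‖p j‖) (Finset.mem_univ i)
  have hA₀ : 0 ≤ A := (norm_nonneg _).trans (hp ⟨0, hk⟩)
  have h2A : 2 * A < ‖x‖ := by nlinarith [two_lt_of_cube_eq hC]
  subst hφ hG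
  exact norm_ghGradient_sq_add_inner_div_neg p x hm hp h2A

/-- **Determinant positivity for large spheres.** For the Gibbons--Hawking potential
`φ(x) = m + ∑ i, 1/(2‖x − p i‖)` with gradient `G(x) = −∑ i, (x − p i)/(2‖x − p i‖³)`,
`A = max_i ‖p i‖` and `C` the real root of `−x³ + 4x² + 5x + 2`, whenever `‖x‖ > C·A`
(and `‖x‖ > 0`, `x ≠ p i`) one has `‖G(x)‖² + 2φ(x)⟪G(x), x⟫/‖x‖² < 0`. -/
theorem stmt_5 (k : ℕ) (hk : 1 ≤ k) (p : Fin k → EuclideanSpace ℝ (Fin 3))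
    (m : ℝ) (hm : 0 ≤ m) (A C : ℝ)
    (hA : A = Finset.univ.sup' (Finset.univ_nonempty_iff.mpr ⟨⟨0, hk⟩⟩) fun i => ‖p i‖)
    (hC : C ^ 3 = 4 * C ^ 2 + 5 * C + 2)
    (x : EuclideanSpace ℝ (Fin 3)) (hx : ‖x‖ > C * A) (hx0 : ‖x‖ > 0)
    (hxp : ∀ i, x ≠ p i)
    (φ : ℝ) (hφ : φ = m + ∑ i : Fin k, (2 * ‖x - p i‖)⁻¹)
    (G : EuclideanSpace ℝ (Fin 3))
    (hG : G = -∑ i : Fin k, (2 * ‖x - p i‖ ^ 3)⁻¹ • (x - p i)) :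
    ‖G‖ ^ 2 + 2 * φ * ⟪G, x⟫ / ‖x‖ ^ 2 < 0 :=
  stmt_5_general k hk p m hm A C hA hC x hx φ hφ G hG
end

section
/- Let k ≥ 1, let p₁,…,p_k ∈ ℝ³ with p₁ = 0, and let m ≥ 0. Define φ(x) = m + ∑_{i=1}^k 1/(2‖x − p_i‖) and G(x) = −∑_{i=1}^k (x − p_i)/(2‖x − p_i‖³). Then there exists r₀ > 0 such that for every x ∈ ℝ³ with 0 < ‖x‖ < r₀ and x ≠ p_i for all i, one has ‖G(x)‖² + 2φ(x)·⟪G(x), x⟫/‖x‖² < 0. -/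
/-!
Let `n ≥ 1` be the number of characterizing points at the origin and `t = ‖x‖`. Splitting them
off, `φ = c + n/(2t)` and `G = -((n/(2t³)) • x + r)`, where `c` and `r` collect the other points
and are continuous at `0`. The expression equals `F(x) / t⁴` with
`F(x) = -n²/4 + t⁴‖r‖² - c n t - 2 c t² ⟪r, x⟫`, and `F` is continuous at `0` with
`F(0) = -n²/4 < 0`.
-/

open RealInnerProductSpace Filter Topology Finset

theorem Finset.sum_comp_sub_eq_card_smul_add {ι E M : Type*} [AddGroup E] [AddCommMonoid M]
    (s : Finset ι) (p : ι → E) (f : E → M) (x : E) [DecidablePred fun i => p i = 0] :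
    ∑ i ∈ s, f (x - p i) = #{i ∈ s | p i = 0} • f x + ∑ i ∈ s with p i ≠ 0, f (x - p i) := by
  rw [← sum_filter_add_sum_filter_not s (fun i => p i = 0), ← sum_const]
  congr 1
  exact sum_congr rfl fun i hi => by rw [(mem_filter.mp hi).2, sub_zero]

theorem continuousAt_sum_comp_sub {ι E M : Type*} [TopologicalSpace E] [AddGroup E]
    [IsTopologicalAddGroup E] [TopologicalSpace M] [AddCommMonoid M] [ContinuousAdd M]
    (s : Finset ι) (p : ι → E) {f : E → M} {x₀ : E} (hf : ∀ i ∈ s, ContinuousAt f (x₀ - p i)) :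
    ContinuousAt (fun x => ∑ i ∈ s, f (x - p i)) x₀ :=
  tendsto_finsetSum s fun i hi =>
    ContinuousAt.comp (g := f) (f := fun x => x - p i) (hf i hi) (by fun_prop)

theorem continuousAt_inv_two_mul_norm {E : Type*} [NormedAddCommGroup E] {y : E} (hy : y ≠ 0) :
    ContinuousAt (fun y : E => (2 * ‖y‖)⁻¹) y := by
  have := norm_ne_zero_iff.mpr hy
  fun_prop (disch := positivity)

theorem continuousAt_inv_two_mul_norm_pow_three_smul {E : Type*} [NormedAddCommGroup E]
    [NormedSpace ℝ E] {y : E} (hy : y ≠ 0) :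
    ContinuousAt (fun y : E => (2 * ‖y‖ ^ 3)⁻¹ • y) y := by
  have := norm_ne_zero_iff.mpr hy
  fun_prop (disch := positivity)

section InnerProductSpace

variable {E : Type*} [NormedAddCommGroup E] [InnerProductSpace ℝ E]

theorem norm_sq_add_two_mul_inner_div_norm_sq_eq {x : E} (hx : x ≠ 0) (r : E) (n c : ℝ) :
    ‖-((n * (2 * ‖x‖ ^ 3)⁻¹) • x + r)‖ ^ 2
        + 2 * (c + n * (2 * ‖x‖)⁻¹) * ⟪-((n * (2 * ‖x‖ ^ 3)⁻¹) • x + r), x⟫ / ‖x‖ ^ 2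
      = (-(n ^ 2 / 4) + ‖x‖ ^ 4 * ‖r‖ ^ 2 - c * n * ‖x‖ - 2 * c * ‖x‖ ^ 2 * ⟪r, x⟫) / ‖x‖ ^ 4 := by
  have ht : ‖x‖ ≠ 0 := norm_ne_zero_iff.mpr hx
  rw [norm_neg, norm_add_sq_real, inner_neg_left, inner_add_left, norm_smul, real_inner_smul_left,
    real_inner_smul_left, real_inner_self_eq_norm_sq, real_inner_comm x r, Real.norm_eq_abs,
    mul_pow, sq_abs]
  field_simp
  ring

theorem eventually_neg_sq_div_four_add_lt_zero {r : E → E} {c : E → ℝ} (hr : ContinuousAt r 0)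
    (hc : ContinuousAt c 0) {n : ℝ} (hn : n ≠ 0) :
    ∀ᶠ x in 𝓝 0, -(n ^ 2 / 4) + ‖x‖ ^ 4 * ‖r x‖ ^ 2 - c x * n * ‖x‖
      - 2 * c x * ‖x‖ ^ 2 * ⟪r x, x⟫ < 0 := by
  refine ContinuousAt.eventually_lt (by fun_prop) continuousAt_const ?_
  simp only [norm_zero, inner_zero_right]
  nlinarith [pow_pos (abs_pos.mpr hn) 2, sq_abs n]

end InnerProductSpace

theorem stmt_6_general (k : ℕ) (hk : 1 ≤ k) (p : Fin k → EuclideanSpace ℝ (Fin 3))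
    (hp : p ⟨0, hk⟩ = 0) (m : ℝ)
    (φ : EuclideanSpace ℝ (Fin 3) → ℝ)
    (hφ : ∀ x, φ x = m + ∑ i : Fin k, (2 * ‖x - p i‖)⁻¹)
    (G : EuclideanSpace ℝ (Fin 3) → EuclideanSpace ℝ (Fin 3))
    (hG : ∀ x, G x = -∑ i : Fin k, (2 * ‖x - p i‖ ^ 3)⁻¹ • (x - p i)) :
    ∃ r₀ > 0, ∀ x : EuclideanSpace ℝ (Fin 3), 0 < ‖x‖ → ‖x‖ < r₀ →
      (∀ i, x ≠ p i) →
      ‖G x‖ ^ 2 + 2 * φ x * ⟪G x, x⟫ / ‖x‖ ^ 2 < 0 := by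
  classical
  set n : ℕ := #{i | p i = 0}
  have hn : (n : ℝ) ≠ 0 := by
    have : 0 < n := card_pos.mpr ⟨⟨0, hk⟩, mem_filter.mpr ⟨mem_univ _, hp⟩⟩
    positivity
  set c := fun x => m + ∑ i with p i ≠ 0, (2 * ‖x - p i‖)⁻¹
  set r := fun x => ∑ i with p i ≠ 0, (2 * ‖x - p i‖ ^ 3)⁻¹ • (x - p i)
  have hc : ContinuousAt c 0 := continuousAt_const.add <| continuousAt_sum_comp_sub _ p
    fun i hi => continuousAt_inv_two_mul_norm (by simpa using (mem_filter.mp hi).2)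
  have hr : ContinuousAt r 0 := continuousAt_sum_comp_sub _ p
    fun i hi => continuousAt_inv_two_mul_norm_pow_three_smul (by simpa using (mem_filter.mp hi).2)
  obtain ⟨r₀, hr₀, hF⟩ :=
    Metric.eventually_nhds_iff.mp (eventually_neg_sq_div_four_add_lt_zero hr hc hn)
  refine ⟨r₀, hr₀, fun x hx0 hxr _ => ?_⟩
  have hφx : φ x = c x + n * (2 * ‖x‖)⁻¹ := by
    rw [hφ, sum_comp_sub_eq_card_smul_add univ p (fun y => (2 * ‖y‖)⁻¹), nsmul_eq_mul]
    ring
  have hGx : G x = -(((n : ℝ) * (2 * ‖x‖ ^ 3)⁻¹) • x + r x) := by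
    rw [hG, sum_comp_sub_eq_card_smul_add univ p (fun y => (2 * ‖y‖ ^ 3)⁻¹ • y),
      ← Nat.cast_smul_eq_nsmul ℝ, smul_smul]
  rw [hφx, hGx, norm_sq_add_two_mul_inner_div_norm_sq_eq (norm_pos_iff.mp hx0)]
  exact div_neg_of_neg_of_pos (hF (by simpa using hxr)) (by positivity)

/-- **Determinant negativity for small spheres when a point is at the origin.**
For the Gibbons--Hawking potential `φ(x) = m + ∑ i, 1/(2‖x − p i‖)` with `p 0 = 0` and
gradient `G(x) = −∑ i, (x − p i)/(2‖x − p i‖³)`, there is `r₀ > 0` such that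
`‖G(x)‖² + 2φ(x)⟪G(x), x⟫/‖x‖² < 0` whenever `0 < ‖x‖ < r₀` and `x ≠ p i` for all `i`. -/
theorem stmt_6 (k : ℕ) (hk : 1 ≤ k) (p : Fin k → EuclideanSpace ℝ (Fin 3))
    (hp : p ⟨0, hk⟩ = 0) (m : ℝ) (hm : 0 ≤ m)
    (φ : EuclideanSpace ℝ (Fin 3) → ℝ)
    (hφ : ∀ x, φ x = m + ∑ i : Fin k, (2 * ‖x - p i‖)⁻¹)
    (G : EuclideanSpace ℝ (Fin 3) → EuclideanSpace ℝ (Fin 3))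
    (hG : ∀ x, G x = -∑ i : Fin k, (2 * ‖x - p i‖ ^ 3)⁻¹ • (x - p i)) :
    ∃ r₀ > 0, ∀ x : EuclideanSpace ℝ (Fin 3), 0 < ‖x‖ → ‖x‖ < r₀ →
      (∀ i, x ≠ p i) →
      ‖G x‖ ^ 2 + 2 * φ x * ⟪G x, x⟫ / ‖x‖ ^ 2 < 0 :=
  stmt_6_general k hk p hp m φ hφ G hG
end

section
/- Let k ≥ 2 be an integer, let a > 0, m ≥ 0, and let p₁,…,p_{k−2} ∈ ℝ³ be points (possibly none when k = 2). Define φ̃ : ℝ → ℝ by φ̃(t) = m + ∑_{l=1}^{k−2} 1/(2‖p_l − (0,0,t)‖). Suppose there is a real number s > 0 with 2s² ≥ k − 2, 4s³ ≥ 16s² + 2s + (k − 2), and ‖p_l‖ > (s + 1)a for every l. Then for every t ∈ [−a, a] (where φ̃ is smooth, since ‖p_l‖ > a), writing φ̃′ and φ̃″ for the first and second derivatives of φ̃, one has 2(φ̃′(t))²(a² − t²)³ + 8at·φ̃′(t)(a² − t²) − a·φ̃″(t)(a² − t²)² − φ̃(t)·φ̃″(t)(a² − t²)³ − 2a² − 2a·φ̃(t)(a²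 − t²) − 8a·φ̃(t)·t² < 0. -/
/-!
On the segment, `D l = ‖p l - (0, 0, t)‖ ≥ ‖p l‖ - |t| > s a`. Writing `u l = t - (p l)₃`,
one has `φ̃ = m + ψ`, `φ̃′ = -B` and `φ̃″ = 3 W - S` with `ψ = ∑ 1 / (2 D)`,
`B = ∑ u / (2 D³)`, `W = ∑ u² / (2 D⁵)` and `S = ∑ 1 / (2 D³)`. Termwise `B_l² = ψ_l W_l`, so
Cauchy–Schwarz gives `B² ≤ ψ W`, which makes `2 φ̃′² - φ̃ φ̃″ ≤ φ̃ S`. The lower bound on `D`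
gives `s a |B| ≤ ψ`, `2 s a ψ ≤ k - 2` and `2 (s a)³ S ≤ k - 2`; since the hypotheses on `s`
force `s ≥ 4` and `k - 2 ≤ 2 s²`, these become `4 a |B| ≤ ψ`, `4 a³ S ≤ 1` and `a⁴ ψ S ≤ 1`,
and then every remaining term is dominated by `-2 a²`.
-/

open Filter Topology

noncomputable def axisPoint (τ : ℝ) : EuclideanSpace ℝ (Fin 3) :=
  (EuclideanSpace.equiv (Fin 3) ℝ).symm ![0, 0, τ]

lemma norm_axisPoint (τ : ℝ) : ‖axisPoint τ‖ = |τ| := by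
  simp [axisPoint, EuclideanSpace.norm_eq, Fin.sum_univ_three, Real.sqrt_sq_eq_abs]

lemma norm_sub_axisPoint_eq_sqrt (v : EuclideanSpace ℝ (Fin 3)) (τ : ℝ) :
    ‖v - axisPoint τ‖ = √(v 0 ^ 2 + v 1 ^ 2 + (τ - v 2) ^ 2) := by
  rw [EuclideanSpace.norm_eq]
  congr 1
  simp only [axisPoint, PiLp.continuousLinearEquiv_symm_apply, PiLp.sub_apply, Real.norm_eq_abs,
    sq_abs, Fin.sum_univ_three, Fin.isValue, Matrix.cons_val_zero, sub_zero, Matrix.cons_val_one,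
    Matrix.cons_val, add_right_inj]
  ring

lemma abs_sub_le_norm_sub_axisPoint (v : EuclideanSpace ℝ (Fin 3)) (τ : ℝ) :
    |τ - v 2| ≤ ‖v - axisPoint τ‖ := by
  rw [norm_sub_axisPoint_eq_sqrt]
  exact Real.abs_le_sqrt (by nlinarith [sq_nonneg (v 0), sq_nonneg (v 1)])

section Derivatives

variable {v : EuclideanSpace ℝ (Fin 3)} {τ : ℝ}

lemma hasDerivAt_norm_sub_axisPoint (h : 0 < ‖v - axisPoint τ‖) :
    HasDerivAt (fun τ => ‖v - axisPoint τ‖) ((τ - v 2) / ‖v - axisPoint τ‖) τ := by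
  simp only [norm_sub_axisPoint_eq_sqrt] at h ⊢
  have hq : HasDerivAt (fun τ => v 0 ^ 2 + v 1 ^ 2 + (τ - v 2) ^ 2) (2 * (τ - v 2)) τ := by
    simpa using (((hasDerivAt_id τ).sub_const (v 2)).pow 2).const_add (v 0 ^ 2 + v 1 ^ 2)
  convert hq.sqrt (Real.sqrt_pos.1 h).ne' using 1
  field_simp

lemma hasDerivAt_inv_two_norm_sub_axisPoint (h : 0 < ‖v - axisPoint τ‖) :
    HasDerivAt (fun τ => (2 * ‖v - axisPoint τ‖)⁻¹)
      (-((τ - v 2) / (2 * ‖v - axisPoint τ‖ ^ 3))) τ := by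
  refine (((hasDerivAt_norm_sub_axisPoint h).const_mul 2).fun_inv
    (by positivity)).congr_deriv ?_
  field_simp

lemma hasDerivAt_div_two_norm_sub_axisPoint_pow_three (h : 0 < ‖v - axisPoint τ‖) :
    HasDerivAt (fun τ => -((τ - v 2) / (2 * ‖v - axisPoint τ‖ ^ 3)))
      (3 * ((τ - v 2) ^ 2 / (2 * ‖v - axisPoint τ‖ ^ 5)) - (2 * ‖v - axisPoint τ‖ ^ 3)⁻¹)
      τ := by
  refine (((hasDerivAt_id' τ).sub_const (v 2)).fun_div
    (((hasDerivAt_norm_sub_axisPoint h).fun_pow 3).const_mul 2)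
    (by positivity)).neg.congr_deriv ?_
  field_simp
  ring

end Derivatives

lemma deriv_deriv_eq_of_eventually_hasDerivAt {f f' : ℝ → ℝ} {x f'' : ℝ}
    (hf : ∀ᶠ y in 𝓝 x, HasDerivAt f (f' y) y) (hf' : HasDerivAt f' f'' x) :
    deriv (deriv f) x = f'' := by
  have hderiv : deriv f =ᶠ[𝓝 x] f' := hf.mono fun _ hy => hy.deriv
  rw [hderiv.deriv_eq, hf'.deriv]

section AxialPotential

variable {ι : Type*} [Fintype ι] (p : ι → EuclideanSpace ℝ (Fin 3)) (m : ℝ) {t : ℝ}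

noncomputable def axialPotential (τ : ℝ) : ℝ := m + ∑ l, (2 * ‖p l - axisPoint τ‖)⁻¹

variable {p}

lemma hasDerivAt_axialPotential (h : ∀ l, 0 < ‖p l - axisPoint t‖) :
    HasDerivAt (axialPotential p m)
      (-∑ l, (t - p l 2) / (2 * ‖p l - axisPoint t‖ ^ 3)) t := by
  rw [← Finset.sum_neg_distrib]
  exact (HasDerivAt.fun_sum fun l _ => hasDerivAt_inv_two_norm_sub_axisPoint (h l)).const_add m

lemma deriv_axialPotential (h : ∀ l, 0 < ‖p l - axisPoint t‖) :
    deriv (axialPotential p m) t = -∑ l, (t - p l 2) / (2 * ‖p l - axisPoint t‖ ^ 3) :=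
  (hasDerivAt_axialPotential m h).deriv

lemma deriv_deriv_axialPotential (h : ∀ l, 0 < ‖p l - axisPoint t‖) :
    deriv (deriv (axialPotential p m)) t =
      3 * ∑ l, (t - p l 2) ^ 2 / (2 * ‖p l - axisPoint t‖ ^ 5)
        - ∑ l, (2 * ‖p l - axisPoint t‖ ^ 3)⁻¹ := by
  have hnear : ∀ᶠ τ in 𝓝 t, ∀ l, 0 < ‖p l - axisPoint τ‖ :=
    eventually_all.2 fun l =>
      (hasDerivAt_norm_sub_axisPoint (h l)).continuousAt.eventually (lt_mem_nhds (h l))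
  refine deriv_deriv_eq_of_eventually_hasDerivAt
    (hnear.mono fun τ hτ => hasDerivAt_axialPotential m hτ) ?_
  simp_rw [Finset.mul_sum, ← Finset.sum_sub_distrib, ← Finset.sum_neg_distrib]
  exact HasDerivAt.fun_sum fun l _ => hasDerivAt_div_two_norm_sub_axisPoint_pow_three (h l)

end AxialPotential

section SumBounds

variable {ι : Type*} [Fintype ι] {D u : ι → ℝ} {R : ℝ}

lemma sq_sum_div_le_sum_inv_mul_sum (hD : ∀ l, 0 ≤ D l) :
    (∑ l, u l / (2 * D l ^ 3)) ^ 2 ≤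
      (∑ l, (2 * D l)⁻¹) * ∑ l, u l ^ 2 / (2 * D l ^ 5) := by
  refine Finset.sum_sq_le_sum_mul_sum_of_sq_le_mul _ (fun l _ => by have := hD l; positivity)
    (fun l _ => by have := hD l; positivity) fun l _ => le_of_eq ?_
  rcases (hD l).eq_or_lt with h | h
  · simp [← h]
  · field_simp

lemma mul_abs_sum_div_le_sum_inv (hR : 0 < R) (hD : ∀ l, R ≤ D l) (hu : ∀ l, |u l| ≤ D l) :
    R * |∑ l, u l / (2 * D l ^ 3)| ≤ ∑ l, (2 * D l)⁻¹ := by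
  refine (mul_le_mul_of_nonneg_left (Finset.abs_sum_le_sum_abs _ _) hR.le).trans ?_
  rw [Finset.mul_sum]
  refine Finset.sum_le_sum fun l _ => ?_
  have hDl := hR.trans_le (hD l)
  rw [abs_div, abs_of_pos (by positivity : 0 < 2 * D l ^ 3), mul_div_assoc',
    div_le_iff₀ (by positivity)]
  calc R * |u l| ≤ D l * D l := mul_le_mul (hD l) (hu l) (abs_nonneg _) hDl.le
    _ = (2 * D l)⁻¹ * (2 * D l ^ 3) := by field_simp

lemma mul_sum_inv_two_mul_pow_le_card (hR : 0 < R) (hD : ∀ l, R ≤ D l) (n : ℕ) :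
    2 * R ^ n * ∑ l, (2 * D l ^ n)⁻¹ ≤ Fintype.card ι := by
  rw [Finset.mul_sum, ← nsmul_one, ← Finset.card_univ, ← Finset.sum_const]
  refine Finset.sum_le_sum fun l _ => ?_
  have hRD : R ^ n ≤ D l ^ n := pow_le_pow_left₀ hR.le (hD l) n
  have hDn : 0 < D l ^ n := (pow_pos hR n).trans_le hRD
  calc 2 * R ^ n * (2 * D l ^ n)⁻¹ = R ^ n / D l ^ n := by field_simp
    _ ≤ 1 := (div_le_one hDn).2 hRD

end SumBounds

lemma four_le_of_cubic_ge {s K : ℝ} (hs : 0 < s) (hK : 0 ≤ K)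
    (h : 4 * s ^ 3 ≥ 16 * s ^ 2 + 2 * s + K) : 4 ≤ s := by
  nlinarith [mul_pos hs hs]

section Curvature

variable {a m t ψ B W S : ℝ}

lemma curvature_numerator_neg_of_scaled_bounds (ha : 0 < a) (hm : 0 ≤ m) (ht : |t| ≤ a)
    (hψ : 0 ≤ ψ) (hW : 0 ≤ W) (hS : 0 ≤ S) (hBψW : B ^ 2 ≤ ψ * W) (hB : 4 * a * |B| ≤ ψ)
    (haS : 4 * a ^ 3 * S ≤ 1) (hψS : a ^ 4 * (ψ * S) ≤ 1) :
    2 * (-B) ^ 2 * (a ^ 2 - t ^ 2) ^ 3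
      + 8 * a * t * (-B) * (a ^ 2 - t ^ 2)
      - a * (3 * W - S) * (a ^ 2 - t ^ 2) ^ 2
      - (m + ψ) * (3 * W - S) * (a ^ 2 - t ^ 2) ^ 3
      - 2 * a ^ 2 - 2 * a * (m + ψ) * (a ^ 2 - t ^ 2)
      - 8 * a * (m + ψ) * t ^ 2 < 0 := by
  have ht2 : t ^ 2 ≤ a ^ 2 := sq_le_sq' (abs_le.1 ht).1 (abs_le.1 ht).2
  set c := a ^ 2 - t ^ 2
  have hc : 0 ≤ c := by linarith
  have hca : c ≤ a ^ 2 := by nlinarith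
  have hBW : 2 * B ^ 2 - (m + ψ) * (3 * W - S) ≤ (m + ψ) * S := by
    nlinarith [mul_nonneg hm hW, mul_nonneg hψ hW]
  have htB : 0 ≤ 2 * a * ψ + 8 * a * t * B := by
    have htB' : |t * B| ≤ a * |B| := by
      rw [abs_mul]
      exact mul_le_mul_of_nonneg_right ht (abs_nonneg B)
    nlinarith [neg_abs_le (t * B)]
  have hc3 : (2 * B ^ 2 - (m + ψ) * (3 * W - S)) * c ^ 3 ≤ (m + ψ) * S * (a ^ 2) ^ 3 :=
    calc _ ≤ (m + ψ) * S * c ^ 3 := mul_le_mul_of_nonneg_right hBW (by positivity)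
      _ ≤ _ := mul_le_mul_of_nonneg_left (pow_le_pow_left₀ hc hca 3) (by positivity)
  have hc2 : -(a * (3 * W - S) * c ^ 2) ≤ a * S * (a ^ 2) ^ 2 :=
    calc _ ≤ a * S * c ^ 2 := by nlinarith [mul_nonneg (mul_nonneg ha.le hW) (sq_nonneg c)]
      _ ≤ _ := mul_le_mul_of_nonneg_left (pow_le_pow_left₀ hc hca 2) (by positivity)
  have hma : 0 ≤ a ^ 3 * m * (1 - 4 * a ^ 3 * S) :=
    mul_nonneg (mul_nonneg (pow_pos ha 3).le hm) (by linarith)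
  have hψa : 0 ≤ a ^ 2 * (1 - a ^ 4 * (ψ * S)) := mul_nonneg (sq_nonneg a) (by linarith)
  have hSa : 0 ≤ a ^ 2 * (1 - 4 * a ^ 3 * S) := mul_nonneg (sq_nonneg a) (by linarith)
  nlinarith [mul_nonneg htB hc, mul_nonneg (mul_nonneg ha.le hm) (sq_nonneg t),
    mul_nonneg (mul_nonneg ha.le hψ) (sq_nonneg t), pow_pos ha 2]

lemma curvature_numerator_neg {s K : ℝ} (hs : 4 ≤ s) (hK : K ≤ 2 * s ^ 2)
    (ha : 0 < a) (hm : 0 ≤ m) (ht : |t| ≤ a) (hψ : 0 ≤ ψ) (hW : 0 ≤ W) (hS : 0 ≤ S)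
    (hBψW : B ^ 2 ≤ ψ * W) (hB : s * a * |B| ≤ ψ) (hψK : 2 * (s * a) * ψ ≤ K)
    (hSK : 2 * (s * a) ^ 3 * S ≤ K) :
    2 * (-B) ^ 2 * (a ^ 2 - t ^ 2) ^ 3
      + 8 * a * t * (-B) * (a ^ 2 - t ^ 2)
      - a * (3 * W - S) * (a ^ 2 - t ^ 2) ^ 2
      - (m + ψ) * (3 * W - S) * (a ^ 2 - t ^ 2) ^ 3
      - 2 * a ^ 2 - 2 * a * (m + ψ) * (a ^ 2 - t ^ 2)
      - 8 * a * (m + ψ) * t ^ 2 < 0 := by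
  have hs0 : 0 < s := by linarith
  have haψ : a * ψ ≤ s := by nlinarith
  have hsaS : s * (a ^ 3 * S) ≤ 1 := by nlinarith [pow_pos hs0 2]
  refine curvature_numerator_neg_of_scaled_bounds ha hm ht hψ hW hS hBψW ?_ ?_ ?_
  · nlinarith [mul_nonneg ha.le (abs_nonneg B)]
  · nlinarith [pow_pos ha 3]
  · nlinarith [mul_nonneg ha.le hψ, pow_pos ha 3]

end Curvature

/-- **Strong stability criterion (Gaussian curvature positivity along the segment).**
Let `φ̃(t) = m + ∑ l, 1/(2‖p l − (0,0,t)‖)` be the contribution of the other singular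
points along the segment joining `(0,0,a)` and `(0,0,−a)`. If there is `s > 0` with
`2s² ≥ k − 2`, `4s³ ≥ 16s² + 2s + (k − 2)` and `‖p l‖ > (s + 1)a` for all `l`, then for
every `t ∈ [−a, a]` the quantity `M + N` is negative:
`2(φ̃′)²(a²−t²)³ + 8at φ̃′ (a²−t²) − a φ̃″ (a²−t²)² − φ̃ φ̃″ (a²−t²)³ − 2a² − 2a φ̃ (a²−t²) − 8a φ̃ t² < 0`. -/
theorem stmt_9 (k : ℕ) (hk : 2 ≤ k) (a m : ℝ) (ha : 0 < a) (hm : 0 ≤ m)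
    (p : Fin (k - 2) → EuclideanSpace ℝ (Fin 3))
    (φ : ℝ → ℝ)
    (hφ : ∀ t, φ t = m + ∑ l : Fin (k - 2),
      (2 * ‖p l - (EuclideanSpace.equiv (Fin 3) ℝ).symm ![0, 0, t]‖)⁻¹)
    (s : ℝ) (hs : 0 < s) (hs1 : 2 * s ^ 2 ≥ (k : ℝ) - 2)
    (hs2 : 4 * s ^ 3 ≥ 16 * s ^ 2 + 2 * s + ((k : ℝ) - 2))
    (hp : ∀ l, ‖p l‖ > (s + 1) * a) :
    ∀ t ∈ Set.Icc (-a) a,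
      2 * (deriv φ t) ^ 2 * (a ^ 2 - t ^ 2) ^ 3
        + 8 * a * t * deriv φ t * (a ^ 2 - t ^ 2)
        - a * deriv (deriv φ) t * (a ^ 2 - t ^ 2) ^ 2
        - φ t * deriv (deriv φ) t * (a ^ 2 - t ^ 2) ^ 3
        - 2 * a ^ 2 - 2 * a * φ t * (a ^ 2 - t ^ 2)
        - 8 * a * φ t * t ^ 2 < 0 := by
  obtain rfl : φ = axialPotential p m := funext hφ
  intro t ht
  have hta : |t| ≤ a := abs_le.2 ht
  have hsa : 0 < s * a := mul_pos hs ha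
  have hD : ∀ l, s * a ≤ ‖p l - axisPoint t‖ := fun l => by
    linarith [hp l, norm_sub_norm_le (p l) (axisPoint t), norm_axisPoint t]
  have hD0 : ∀ l, 0 < ‖p l - axisPoint t‖ := fun l => hsa.trans_le (hD l)
  have hcard : (Fintype.card (Fin (k - 2)) : ℝ) = k - 2 := by
    rw [Fintype.card_fin, Nat.cast_sub hk, Nat.cast_ofNat]
  rw [deriv_deriv_axialPotential m hD0, deriv_axialPotential m hD0, axialPotential]
  refine curvature_numerator_neg
    (four_le_of_cubic_ge hs (by linarith [(Nat.cast_le (α := ℝ)).2 hk]) hs2) hs1 ha hm hta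
    (Finset.sum_nonneg fun l _ => by have := hD0 l; positivity)
    (Finset.sum_nonneg fun l _ => by have := hD0 l; positivity)
    (Finset.sum_nonneg fun l _ => by have := hD0 l; positivity)
    (sq_sum_div_le_sum_inv_mul_sum fun l => (hD0 l).le)
    (mul_abs_sum_div_le_sum_inv hsa hD fun l => abs_sub_le_norm_sub_axisPoint (p l) t) ?_ ?_
  · simpa only [pow_one, hcard] using mul_sum_inv_two_mul_pow_le_card hsa hD 1
  · simpa only [hcard] using mul_sum_inv_two_mul_pow_le_card hsa hD 3
end
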